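/- arXiv:0906.0720 — 3 statements merged into one kernel-verified Lean document; each statement's English description precedes it below -/
import Mathlib

section
/- For all n, all 0 ≤ m ≤ C(n,2) and all 0 ≤ ℓ ≤ C(n,2), with p := m/C(n,2), one has q(ℓ; n, m) ≤ (1 − p/2)^ℓ; that is, the probability in ⃗G(n,m) of avoiding ℓ fixed directed edges is at most the corresponding probability (1 − p/2)^ℓ in ⃗G(n,p). -/
open Filter Real

/-- Edges of the complete graph on `Fin n`: ordered pairs `(u,v)` with `u < v`. -/
abbrev Edge (n : ℕ) : Type := {e : Fin n × Fin n // e.1 < e.2}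

/-- A configuration of the random edge-orientation model: for each pair `u < v`,
`none` means no edge, `some true` means the directed edge `u → v`, and
`some false` means the directed edge `v → u`. -/
abbrev Config (n : ℕ) : Type := Edge n → Option Bool

/-- The directed edge relation determined by a configuration. -/
def DirEdge {n : ℕ} (f : Config n) (u v : Fin n) : Prop :=
  (∃ h : u < v, f ⟨(u, v), h⟩ = some true) ∨ (∃ h : v < u, f ⟨(v, u), h⟩ = some false)

/-- `Reaches f u v`: the configuration `f` contains a directed path from `u` to `v`
(paths of length `0` are allowed, so `Reaches f u u` always holds). -/
def Reaches {n : ℕ} (f : Config n) (u v : Fin n) : Prop :=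
  Relation.ReflTransGen (DirEdge f) u v

/-- The probability of an event under a weight function on a finite sample space. -/
noncomputable def prWeight {α : Type*} [Fintype α] (w : α → ℝ) (E : Set α) : ℝ :=
  ∑ x, E.indicator w x

/-- The weight of one edge state in `⃗G(n,p)`: no edge has probability `1 - p`
and each of the two orientations has probability `p/2`. -/
noncomputable def edgeWeight (p : ℝ) : Option Bool → ℝ
  | none => 1 - p
  | some _ => p / 2

/-- The probability of an event in the random directed graph `⃗G(n,p)`. -/
noncomputable def PrGnp (n : ℕ) (p : ℝ) (E : Set (Config n)) : ℝ :=
  prWeight (fun f => ∏ e : Edge n, edgeWeight p (f e)) E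

/-- The number of present edges of a configuration. -/
def edgeCount {n : ℕ} (f : Config n) : ℕ :=
  (Finset.univ.filter fun e : Edge n => (f e).isSome).card

/-- The probability of an event in the random directed graph `⃗G(n,m)`:
the underlying graph is uniform among the graphs with exactly `m` edges, and each
present edge is oriented in one of its two directions with probability `1/2`,
independently over edges. -/
noncomputable def PrGnm (n m : ℕ) (E : Set (Config n)) : ℝ :=
  prWeight (fun f => if edgeCount f = m
      then ((Nat.choose (Nat.choose n 2) m : ℝ) * 2 ^ m)⁻¹ else 0) E

/-! A configuration avoiding the `ℓ` directed edges keeps, on each of those pairs, "no edge"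
or the reverse orientation, so counting by number of edges gives the generating polynomial
`(1 + X)^ℓ (1 + 2X)^(N - ℓ)` with `N = C(n,2)`, against `(1 + 2X)^N` for all configurations.
Turning one free pair into a constrained one replaces `1 + 2X` by `1 + 2X - X`; the coefficient
of `X^(m-1)` lost this way is at least `m/(2N)` times that of `X^m`, by comparing the derivative
of `(1 + X)^a (1 + 2X)^(b+1)` with `2N (1 + X)^a (1 + 2X)^b` and using `1 + 2X ≤ 2(1 + X)`
coefficientwise. Hence each constrained pair costs a factor at most `1 - m/(2N)`. -/

open Finset Polynomial

/-- The number of ways to choose `m` of `a + b` pairs and orient them, where each of the first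
`a` pairs has a single allowed orientation. -/
noncomputable def avoidCount (a b m : ℕ) : ℕ := ((1 + X) ^ a * (1 + 2 * X) ^ b : ℕ[X]).coeff m

lemma avoidCount_zero_left (b m : ℕ) : avoidCount 0 b m = b.choose m * 2 ^ m := by
  have hterm (k : ℕ) : (2 * X : ℕ[X]) ^ k * 1 ^ (b - k) * (b.choose k : ℕ[X])
      = C (b.choose k * 2 ^ k) * X ^ k := by
    rw [map_mul, map_pow, C_ofNat, ← C_eq_natCast, Nat.cast_id]; ring
  rw [avoidCount, pow_zero, one_mul, add_comm, add_pow, finsetSum_coeff]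
  simp only [hterm, coeff_C_mul_X_pow, sum_ite_eq, mem_range]
  split_ifs with hm
  · rfl
  · rw [Nat.choose_eq_zero_of_lt (by omega), zero_mul]

lemma avoidCount_zero_right (a b : ℕ) : avoidCount a b 0 = 1 := by
  simp [avoidCount, coeff_zero_eq_eval_zero]

lemma avoidCount_succ_right (a b m : ℕ) :
    avoidCount a (b + 1) (m + 1) = avoidCount (a + 1) b (m + 1) + avoidCount a b m := by
  have : ((1 + X) ^ a * (1 + 2 * X) ^ (b + 1) : ℕ[X])
      = (1 + X) ^ (a + 1) * (1 + 2 * X) ^ b + X * ((1 + X) ^ a * (1 + 2 * X) ^ b) := by ring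
  simp only [avoidCount, this, coeff_add, coeff_X_mul]

lemma succ_mul_avoidCount_le (a b m : ℕ) :
    (m + 1) * avoidCount a (b + 1) (m + 1) ≤ 2 * (a + b + 1) * avoidCount a b m := by
  have key : ∃ Q : ℕ[X], derivative ((1 + X) ^ a * (1 + 2 * X) ^ (b + 1) : ℕ[X]) + Q
      = ((2 * (a + b + 1) : ℕ) : ℕ[X]) * ((1 + X) ^ a * (1 + 2 * X) ^ b) := by
    rcases a with _ | a
    · refine ⟨0, ?_⟩
      simp only [derivative_mul, derivative_pow, derivative_add, derivative_one, derivative_X,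
        derivative_ofNat, eq_natCast]
      push_cast
      ring
    · refine ⟨(a + 1 : ℕ[X]) * ((1 + X) ^ a * (1 + 2 * X) ^ b), ?_⟩
      simp only [derivative_mul, derivative_pow, derivative_add, derivative_one, derivative_X,
        derivative_ofNat, eq_natCast]
      push_cast
      ring
  obtain ⟨Q, hQ⟩ := key
  -- `(m + 1) [X^(m+1)] P = [X^m] P'`
  have hcoeff := congrArg (coeff · m) hQ
  simp only [coeff_add, coeff_derivative, coeff_natCast_mul, Nat.cast_id] at hcoeff
  rw [avoidCount, avoidCount]
  nlinarith

lemma avoidCount_succ_left_le (a b m : ℕ) :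
    (avoidCount (a + 1) b m : ℝ) ≤
      (1 - m / ((a + b + 1 : ℕ) : ℝ) / 2) * avoidCount a (b + 1) m := by
  rcases m with _ | m
  · simp [avoidCount_zero_right]
  have hrec : (avoidCount (a + 1) b (m + 1) : ℝ)
      = avoidCount a (b + 1) (m + 1) - avoidCount a b m := by
    rw [avoidCount_succ_right]; push_cast; ring
  have hle : ((m + 1 : ℕ) : ℝ) * avoidCount a (b + 1) (m + 1)
      ≤ 2 * ((a + b + 1 : ℕ) : ℝ) * avoidCount a b m := by
    exact_mod_cast succ_mul_avoidCount_le a b m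
  rw [hrec, sub_mul, one_mul, sub_le_sub_iff_left, div_div, div_mul_eq_mul_div,
    div_le_iff₀ (by positivity)]
  linarith

lemma avoidCount_le {N l m : ℕ} (hl : l ≤ N) (hm : m ≤ N) :
    (avoidCount l (N - l) m : ℝ) ≤ (1 - m / (N : ℝ) / 2) ^ l * (N.choose m * 2 ^ m) := by
  induction l with
  | zero => simp [avoidCount_zero_left]
  | succ l ih =>
    have hstep := avoidCount_succ_left_le l (N - (l + 1)) m
    rw [show l + (N - (l + 1)) + 1 = N by omega, show N - (l + 1) + 1 = N - l by omega] at hstep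
    have hq : 0 ≤ 1 - (m : ℝ) / N / 2 := by
      have : (m : ℝ) / N ≤ 1 := div_le_one_of_le₀ (by exact_mod_cast hm) (by positivity)
      linarith
    calc (avoidCount (l + 1) (N - (l + 1)) m : ℝ)
        ≤ (1 - m / (N : ℝ) / 2) * avoidCount l (N - l) m := hstep
      _ ≤ (1 - m / (N : ℝ) / 2) * ((1 - m / (N : ℝ) / 2) ^ l * (N.choose m * 2 ^ m)) := by
          gcongr; exact ih (by omega)
      _ = _ := by ring

lemma card_edge (n : ℕ) : Fintype.card (Edge n) = n.choose 2 := by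
  rw [Fintype.card_subtype, Fintype.card_product_filter_lt, Fintype.card_fin]

lemma coeff_sum_X_pow {α R : Type*} [Semiring R] (s : Finset α) (g : α → ℕ) (m : ℕ) :
    (∑ x ∈ s, (X : R[X]) ^ g x).coeff m = #{x ∈ s | g x = m} := by
  simp [finsetSum_coeff, coeff_X_pow, eq_comm]

lemma sum_avoiding_X_pow_edgeCount (n : ℕ) (F : Finset (Edge n)) (o : Edge n → Bool) :
    ∑ f with ∀ e ∈ F, f e ≠ some (o e), (X : ℕ[X]) ^ edgeCount f
      = (1 + X) ^ #F * (1 + 2 * X) ^ (n.choose 2 - #F) := by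
  classical
  have hpi : ({f | ∀ e ∈ F, f e ≠ some (o e)} : Finset (Config n))
      = Fintype.piFinset fun e => if e ∈ F then {none, some !o e} else univ := by
    ext f
    simp only [mem_filter, mem_univ, true_and, Fintype.mem_piFinset]
    refine forall_congr' fun e => ?_
    by_cases he : e ∈ F
    · simp only [he, if_true, forall_const, mem_insert, mem_singleton]
      rcases f e with _ | _ | _ <;> cases o e <;> simp
    · simp [he]
  have hmono (f : Config n) :
      (X : ℕ[X]) ^ edgeCount f = ∏ e, X ^ if (f e).isSome then 1 else 0 := by
    rw [prod_pow_eq_pow_sum, edgeCount, card_filter]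
  have hfactor (e : Edge n) : ∑ v ∈ (if e ∈ F then {none, some !o e} else univ),
      (X : ℕ[X]) ^ (if v.isSome then 1 else 0) = if e ∈ F then 1 + X else 1 + 2 * X := by
    split_ifs
    · simp
    · simp [Fintype.sum_option]
  rw [hpi, sum_congr rfl fun f _ => hmono f,
    ← prod_univ_sum (fun e => if e ∈ F then {none, some !o e} else univ)
      fun _ v => (X : ℕ[X]) ^ (if v.isSome then 1 else 0), prod_congr rfl fun e _ => hfactor e,
    prod_ite, prod_const, prod_const, filter_mem_eq_inter, univ_inter, filter_not,
    filter_mem_eq_inter, univ_inter, ← compl_eq_univ_sdiff, card_compl, card_edge]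

lemma card_avoiding_edgeCount_eq (n m : ℕ) (F : Finset (Edge n)) (o : Edge n → Bool) :
    #{f : Config n | (∀ e ∈ F, f e ≠ some (o e)) ∧ edgeCount f = m}
      = avoidCount #F (n.choose 2 - #F) m := by
  rw [avoidCount, ← sum_avoiding_X_pow_edgeCount n F o, coeff_sum_X_pow, filter_filter,
    Nat.cast_id]

lemma prGnm_eq_card_div (n m : ℕ) (E : Set (Config n)) [DecidablePred (· ∈ E)] :
    PrGnm n m E = #{f | f ∈ E ∧ edgeCount f = m} / ((n.choose 2).choose m * 2 ^ m) := by
  rw [PrGnm, prWeight, div_eq_mul_inv, card_filter, Nat.cast_sum, sum_mul]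
  refine sum_congr rfl fun f _ => ?_
  by_cases hE : f ∈ E <;> by_cases hm : edgeCount f = m <;> simp [hE, hm]

/-- For all `n`, all `0 ≤ m ≤ C(n,2)` and any fixed set of directed
edges (a set `F` of unordered pairs with chosen orientations `o`), with
`p := m/C(n,2)`, the probability in `⃗G(n,m)` of avoiding these `|F|` directed edges
is at most `(1 - p/2)^|F|`. -/
theorem gnm_avoid_directed_edges_le
    (n m : ℕ) (hm : m ≤ Nat.choose n 2)
    (F : Finset (Edge n)) (o : Edge n → Bool) :
    PrGnm n m {f | ∀ e ∈ F, f e ≠ some (o e)} ≤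
      (1 - ((m : ℝ) / (Nat.choose n 2 : ℝ)) / 2) ^ F.card := by
  classical
  have hF : #F ≤ n.choose 2 := card_edge n ▸ card_le_univ F
  have hpos : (0 : ℝ) < (n.choose 2).choose m * 2 ^ m := by
    have := Nat.choose_pos hm
    positivity
  rw [prGnm_eq_card_div]
  simp only [Set.mem_ofPred_eq]
  rw [card_avoiding_edgeCount_eq, div_le_iff₀ hpos]
  exact avoidCount_le hF hm
end

section
/- Fix p ∈ (0,1] and for each n ≥ 2 fix two distinct vertices s, a of ⃗G(n,p). Then P(s↛a) = 2(1 − p/2)^{n−1} + O(n(1−p/2)^{2n}) as n → ∞; in particular P(s↛a) ∼ 2(1 − p/2)^{n−1}, i.e. P(s↛a)/(1−p/2)^{n−1} → 2. -/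
open Filter Real

/-!
Write `q = 1 - p/2`. The vertex `a` is unreachable from `s` exactly when some set `S` with
`s ∈ S`, `a ∉ S` has no edge leaving it, and for a fixed `S` this happens with probability
`q ^ (|S| (n - |S|))`: each of the `|S| (n - |S|)` pairs across the cut must avoid one of its
two orientations. The sets `{s}` and `V \ {a}` each give `q^(n-1)` and their events overlap with
probability at most `q^(2n-3)`, which is the lower bound. The union bound over all `S` gives the
upper bound; there the sets with `2 ≤ |S| ≤ n - 2` contribute `O(n q^(2n-4))`, because
`k (n - k) = 2n - 4 + (k - 2)(n - k - 2)` and the binomial coefficient `C(n-2, k-1)` is beaten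
by the geometric factor `q^((k-2)(n-k-2))`. Since `q ≥ 1/2`, `q^(2n-4)` and `q^(2n)` are
comparable.
-/

open Finset

section prWeight

variable {α : Type*} [Fintype α] {w : α → ℝ}

lemma prWeight_nonneg (hw : 0 ≤ w) (E : Set α) : 0 ≤ prWeight w E :=
  sum_nonneg fun x _ => Set.indicator_nonneg (fun y _ => hw y) x

lemma prWeight_mono (hw : 0 ≤ w) {E F : Set α} (h : E ⊆ F) : prWeight w E ≤ prWeight w F :=
  sum_le_sum fun x _ => Set.indicator_le_indicator_of_subset h hw x

lemma prWeight_union_add_inter (w : α → ℝ) (E F : Set α) :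
    prWeight w (E ∪ F) + prWeight w (E ∩ F) = prWeight w E + prWeight w F := by
  simp only [prWeight, ← sum_add_distrib]
  exact sum_congr rfl fun x _ => Set.indicator_union_add_inter_apply w E F x

lemma prWeight_biUnion_le (hw : 0 ≤ w) {ι : Type*} (t : Finset ι) (E : ι → Set α) :
    prWeight w (⋃ i ∈ t, E i) ≤ ∑ i ∈ t, prWeight w (E i) := by
  classical
  induction t using Finset.induction_on with
  | empty => simp [prWeight]
  | insert i t hi ih =>
    rw [set_biUnion_insert, sum_insert hi]
    linarith [prWeight_union_add_inter w (E i) (⋃ j ∈ t, E j),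
      prWeight_nonneg hw (E i ∩ ⋃ j ∈ t, E j)]

end prWeight

variable {N : ℕ} {p : ℝ}

lemma edgeWeight_nonneg (hp₀ : 0 ≤ p) (hp₁ : p ≤ 1) (b : Option Bool) :
    0 ≤ edgeWeight p b := by
  cases b <;> simp only [edgeWeight] <;> linarith

lemma prod_edgeWeight_nonneg (hp₀ : 0 ≤ p) (hp₁ : p ≤ 1) :
    0 ≤ fun f : Config N => ∏ e, edgeWeight p (f e) := fun f =>
  prod_nonneg fun e _ => edgeWeight_nonneg hp₀ hp₁ (f e)

lemma PrGnp_setOf_forall_mem (p : ℝ) (A : Edge N → Finset (Option Bool)) :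
    PrGnp N p {f | ∀ e, f e ∈ A e} = ∏ e, ∑ b ∈ A e, edgeWeight p b := by
  rw [PrGnp, prWeight, sum_indicator_eq_sum_filter, prod_univ_sum]
  refine (sum_congr ?_ fun _ _ => rfl).symm
  ext f
  simp [Fintype.mem_piFinset]

def Crosses (S : Finset (Fin N)) (e : Edge N) : Prop :=
  Xor (e.1.1 ∈ S) (e.1.2 ∈ S)

instance (S : Finset (Fin N)) : DecidablePred (Crosses S) := fun _ =>
  inferInstanceAs (Decidable (Xor _ _))

lemma crosses_compl (S : Finset (Fin N)) (e : Edge N) : Crosses Sᶜ e ↔ Crosses S e := by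
  simp only [Crosses, mem_compl, xor_not_not]

lemma card_crosses (S : Finset (Fin N)) : #{e : Edge N | Crosses S e} = #S * (N - #S) := by
  have hc : N - #S = #Sᶜ := by rw [card_compl, Fintype.card_fin]
  rw [hc, ← card_product]
  refine card_nbij (fun e => if e.1.1 ∈ S then e.1 else e.1.swap) ?_ ?_ ?_
  · rintro ⟨⟨u, v⟩, huv⟩ he
    simp only [Crosses, xor_def, coe_filter, Set.mem_ofPred_eq, mem_univ, true_and] at he
    rcases he with ⟨hu, hv⟩ | ⟨hv, hu⟩ <;> simp [hu, hv]
  · rintro ⟨⟨u, v⟩, huv⟩ he ⟨⟨u', v'⟩, huv'⟩ he' h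
    simp only [Crosses, xor_def, coe_filter, Set.mem_ofPred_eq, mem_univ, true_and] at he he'
    simp only at huv huv' h
    rw [Subtype.mk.injEq]
    split_ifs at h <;> grind [Prod.ext_iff]
  · rintro ⟨u, v⟩ huv
    simp only [coe_product, coe_compl, Set.mem_prod, mem_coe, Set.mem_compl_iff] at huv
    rcases lt_or_gt_of_ne (show u ≠ v by rintro rfl; exact huv.2 huv.1) with h | h
    · exact ⟨⟨(u, v), h⟩, by simp [Crosses, xor_def, huv], by simp [huv]⟩
    · exact ⟨⟨(v, u), h⟩, by simp [Crosses, xor_def, huv], by simp [huv]⟩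

def Exits (S : Finset (Fin N)) (e : Edge N) : Option Bool → Prop
  | some true => e.1.1 ∈ S ∧ e.1.2 ∉ S
  | some false => e.1.2 ∈ S ∧ e.1.1 ∉ S
  | none => False

instance (S : Finset (Fin N)) (e : Edge N) : DecidablePred (Exits S e)
  | some true => inferInstanceAs (Decidable (_ ∧ _))
  | some false => inferInstanceAs (Decidable (_ ∧ _))
  | none => inferInstanceAs (Decidable False)

def noEdgeOut (S : Finset (Fin N)) : Set (Config N) :=
  {f | ∀ u ∈ S, ∀ v ∉ S, ¬ DirEdge f u v}

lemma noEdgeOut_eq_setOf_forall (S : Finset (Fin N)) :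
    noEdgeOut S = {f | ∀ e, f e ∈ ({b | ¬ Exits S e b} : Finset (Option Bool))} := by
  ext f
  simp only [noEdgeOut, Set.mem_ofPred_eq, mem_filter, mem_univ, true_and]
  constructor
  · rintro hf ⟨⟨u, v⟩, huv⟩ hexit
    rcases hfe : f ⟨(u, v), huv⟩ with _ | _ | _ <;> simp only [hfe, Exits] at hexit
    · exact hf v hexit.1 u hexit.2 (Or.inr ⟨huv, hfe⟩)
    · exact hf u hexit.1 v hexit.2 (Or.inl ⟨huv, hfe⟩)
  · rintro hf u hu v hv (⟨huv, hfe⟩ | ⟨huv, hfe⟩)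
    · exact hf ⟨(u, v), huv⟩ (by simp only [hfe, Exits]; exact ⟨hu, hv⟩)
    · exact hf ⟨(v, u), huv⟩ (by simp only [hfe, Exits]; exact ⟨hu, hv⟩)

lemma sum_edgeWeight_not_exits (p : ℝ) (S : Finset (Fin N)) (e : Edge N) :
    ∑ b with ¬ Exits S e b, edgeWeight p b = if Crosses S e then 1 - p / 2 else 1 := by
  rw [sum_filter, Fintype.sum_option, Fintype.sum_bool]
  by_cases h₁ : e.1.1 ∈ S <;> by_cases h₂ : e.1.2 ∈ S <;>
    simp [Exits, Crosses, edgeWeight, h₁, h₂] <;> ring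

lemma PrGnp_noEdgeOut (p : ℝ) (S : Finset (Fin N)) :
    PrGnp N p (noEdgeOut S) = (1 - p / 2) ^ (#S * (N - #S)) := by
  rw [noEdgeOut_eq_setOf_forall, PrGnp_setOf_forall_mem,
    prod_congr rfl fun e _ => sum_edgeWeight_not_exits p S e, ← prod_filter, prod_const,
    card_crosses]

lemma PrGnp_noEdgeOut_inter_le (hp₀ : 0 ≤ p) (hp₁ : p ≤ 1) (S T : Finset (Fin N)) :
    PrGnp N p (noEdgeOut S ∩ noEdgeOut T) ≤
      (1 - p / 2) ^ #{e : Edge N | Crosses S e ∨ Crosses T e} := by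
  have hinter : noEdgeOut S ∩ noEdgeOut T = {f | ∀ e, f e ∈
      ({b | ¬ Exits S e b} : Finset (Option Bool)) ∩ ({b | ¬ Exits T e b} : Finset _)} := by
    ext f
    simp only [noEdgeOut_eq_setOf_forall, Set.mem_inter_iff, Set.mem_ofPred_eq, mem_inter,
      forall_and]
  rw [hinter, PrGnp_setOf_forall_mem, ← prod_const, prod_filter]
  have hw := edgeWeight_nonneg hp₀ hp₁
  refine prod_le_prod (fun e _ => sum_nonneg fun b _ => hw b) fun e _ => ?_
  set A : Finset (Option Bool) := {b | ¬ Exits S e b}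
  set B : Finset (Option Bool) := {b | ¬ Exits T e b}
  have hA : ∑ b ∈ A, edgeWeight p b = if Crosses S e then 1 - p / 2 else 1 :=
    sum_edgeWeight_not_exits p S e
  have hB : ∑ b ∈ B, edgeWeight p b = if Crosses T e then 1 - p / 2 else 1 :=
    sum_edgeWeight_not_exits p T e
  have hAB_A : ∑ b ∈ A ∩ B, edgeWeight p b ≤ ∑ b ∈ A, edgeWeight p b :=
    sum_le_sum_of_subset_of_nonneg inter_subset_left fun b _ _ => hw b
  have hAB_B : ∑ b ∈ A ∩ B, edgeWeight p b ≤ ∑ b ∈ B, edgeWeight p b :=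
    sum_le_sum_of_subset_of_nonneg inter_subset_right fun b _ _ => hw b
  split_ifs at hA hB ⊢ <;> first | linarith | tauto

lemma not_reaches_iff {f : Config N} {s a : Fin N} :
    ¬ Reaches f s a ↔ ∃ S : Finset (Fin N), s ∈ S ∧ a ∉ S ∧ f ∈ noEdgeOut S := by
  classical
  constructor
  · intro h
    refine ⟨({v | Reaches f s v} : Finset _),
      mem_filter.2 ⟨mem_univ _, Relation.ReflTransGen.refl⟩, by simpa using h, ?_⟩
    intro u hu v hv huv
    simp only [mem_filter, mem_univ, true_and] at hu hv
    exact hv (hu.tail huv)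
  · rintro ⟨S, hs, ha, hf⟩ h
    have hclosed : ∀ v, Reaches f s v → v ∈ S := fun v hv => by
      induction hv with
      | refl => exact hs
      | tail _ huv ih => exact by_contra fun hv => hf _ ih _ hv huv
    exact ha (hclosed a h)

lemma le_card_crosses_singleton_or_compl_singleton {s a : Fin N} (hsa : s ≠ a) :
    2 * N - 3 ≤ #{e : Edge N | Crosses {s} e ∨ Crosses {a}ᶜ e} := by
  set A : Finset (Edge N) := {e | Crosses {s} e}
  set B : Finset (Edge N) := {e | Crosses {a}ᶜ e}
  have hA : #A = N - 1 := by rw [card_crosses, card_singleton, one_mul]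
  have hB : #B = N - 1 := by
    have : N - (N - 1) = 1 := by have := a.pos; omega
    rw [card_crosses, card_compl, card_singleton, Fintype.card_fin, this, mul_one]
  have hAB : #(A ∩ B) ≤ 1 := by
    refine card_le_one.2 ?_
    rintro ⟨⟨u, v⟩, huv⟩ he ⟨⟨u', v'⟩, huv'⟩ he'
    simp only [A, B, mem_inter, mem_filter, mem_univ, true_and, crosses_compl] at he he'
    simp only [Crosses, xor_def, mem_singleton] at he he' huv huv'
    rw [Subtype.mk.injEq, Prod.ext_iff]
    grind
  rw [filter_or]
  change _ ≤ #(A ∪ B)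
  have := card_union_add_card_inter A B
  omega

lemma PrGnp_not_reaches_ge (hp₀ : 0 ≤ p) (hp₁ : p ≤ 1) {s a : Fin N} (hsa : s ≠ a) :
    2 * (1 - p / 2) ^ (N - 1) - (1 - p / 2) ^ (2 * N - 3) ≤
      PrGnp N p {f | ¬ Reaches f s a} := by
  have hsub : noEdgeOut {s} ∪ noEdgeOut {a}ᶜ ⊆ {f : Config N | ¬ Reaches f s a} := by
    rintro f (hf | hf) <;> refine not_reaches_iff.2 ⟨_, ?_, ?_, hf⟩ <;> simp [hsa, hsa.symm]
  have hs : PrGnp N p (noEdgeOut {s}) = (1 - p / 2) ^ (N - 1) := by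
    rw [PrGnp_noEdgeOut, card_singleton, one_mul]
  have ha : PrGnp N p (noEdgeOut {a}ᶜ) = (1 - p / 2) ^ (N - 1) := by
    have : N - (N - 1) = 1 := by have := a.pos; omega
    rw [PrGnp_noEdgeOut, card_compl, card_singleton, Fintype.card_fin, this, mul_one]
  have hinter : PrGnp N p (noEdgeOut {s} ∩ noEdgeOut {a}ᶜ) ≤ (1 - p / 2) ^ (2 * N - 3) :=
    (PrGnp_noEdgeOut_inter_le hp₀ hp₁ _ _).trans
      (pow_le_pow_of_le_one (by linarith) (by linarith)
        (le_card_crosses_singleton_or_compl_singleton hsa))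
  have hunion : PrGnp N p (noEdgeOut {s} ∪ noEdgeOut {a}ᶜ) +
      PrGnp N p (noEdgeOut {s} ∩ noEdgeOut {a}ᶜ) =
      PrGnp N p (noEdgeOut {s}) + PrGnp N p (noEdgeOut {a}ᶜ) :=
    prWeight_union_add_inter _ _ _
  have hmono :
      PrGnp N p (noEdgeOut {s} ∪ noEdgeOut {a}ᶜ) ≤ PrGnp N p {f | ¬ Reaches f s a} :=
    prWeight_mono (prod_edgeWeight_nonneg hp₀ hp₁) hsub
  linarith

lemma PrGnp_not_reaches_le (hp₀ : 0 ≤ p) (hp₁ : p ≤ 1) (s a : Fin N) :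
    PrGnp N p {f | ¬ Reaches f s a} ≤
      ∑ S : Finset (Fin N) with s ∈ S ∧ a ∉ S, (1 - p / 2) ^ (#S * (N - #S)) := by
  have hsub : {f : Config N | ¬ Reaches f s a} ⊆
      ⋃ S ∈ ({S | s ∈ S ∧ a ∉ S} : Finset (Finset (Fin N))), noEdgeOut S := by
    intro f hf
    obtain ⟨S, hs, ha, hfS⟩ := not_reaches_iff.1 hf
    exact Set.mem_biUnion (by simp [hs, ha]) hfS
  calc PrGnp N p {f | ¬ Reaches f s a}
      ≤ ∑ S : Finset (Fin N) with s ∈ S ∧ a ∉ S, PrGnp N p (noEdgeOut S) :=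
        (prWeight_mono (prod_edgeWeight_nonneg hp₀ hp₁) hsub).trans
          (prWeight_biUnion_le (prod_edgeWeight_nonneg hp₀ hp₁) _ _)
    _ = _ := sum_congr rfl fun S _ => PrGnp_noEdgeOut p S

lemma sum_separating_eq {α β : Type*} [Fintype α] [DecidableEq α] [AddCommMonoid β] {n : ℕ}
    (hα : Fintype.card α = n + 2) {s a : α} (hsa : s ≠ a) (g : ℕ → β) :
    ∑ S : Finset α with s ∈ S ∧ a ∉ S, g #S =
      ∑ j ∈ range (n + 1), n.choose j • g (j + 1) := by
  have hT : #((univ.erase s).erase a) = n := by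
    rw [card_erase_of_mem (by simp [hsa.symm]), card_erase_of_mem (mem_univ s), card_univ, hα]
    rfl
  rw [← hT, ← sum_powerset_apply_card]
  refine sum_nbij' (fun S => S.erase s) (fun U => insert s U) ?_ ?_ ?_ ?_ ?_
  · intro S hS
    simp only [mem_filter, mem_univ, true_and] at hS
    refine mem_powerset.2 fun v hv => ?_
    simp only [mem_erase] at hv ⊢
    exact ⟨fun h => hS.2 (h ▸ hv.2), hv.1, mem_univ v⟩
  · intro U hU
    refine mem_filter.2 ⟨mem_univ _, mem_insert_self s U, ?_⟩
    rw [mem_insert, not_or]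
    exact ⟨hsa.symm, fun h => by simpa using mem_powerset.1 hU h⟩
  · intro S hS
    exact insert_erase (mem_filter.1 hS).2.1
  · intro U hU
    exact erase_insert fun h => by simpa using mem_powerset.1 hU h
  · intro S hS
    have hs := (mem_filter.1 hS).2.1
    rw [card_erase_of_mem hs, Nat.sub_add_cancel (card_pos.2 ⟨s, hs⟩)]

section Estimates

variable {r : ℝ}

lemma geom_sum_le_two {y : ℝ} (hy₀ : 0 ≤ y) (hy : y ≤ 1 / 2) (n : ℕ) :
    ∑ i ∈ range n, y ^ i ≤ 2 :=
  calc ∑ i ∈ range n, y ^ i ≤ ∑ i ∈ range n, (1 / 2 : ℝ) ^ i :=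
        sum_le_sum fun i _ => pow_le_pow_left₀ hy₀ hy i
    _ ≤ 2 := sum_geometric_two_le n

-- Written for `q = r ^ 2`, so that for `2 i ≤ m` the bound `q ^ (i (m - i)) ≤ (r ^ m) ^ i`
-- needs no halved exponent.
lemma choose_mul_pow_le_of_two_mul_le (hr₀ : 0 ≤ r) (hr₁ : r ≤ 1) {m i : ℕ}
    (hi : 2 * i ≤ m) :
    ((m + 2).choose (i + 1) : ℝ) * (r ^ 2) ^ (i * (m - i)) ≤
      (m + 2) * ((m + 2) * r ^ m) ^ i := by
  have hchoose : ((m + 2).choose (i + 1) : ℝ) ≤ ((m : ℝ) + 2) ^ (i + 1) := by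
    exact_mod_cast Nat.choose_le_pow (m + 2) (i + 1)
  have hexp : m * i ≤ 2 * (i * (m - i)) := by
    obtain ⟨l, rfl⟩ : ∃ l, m = i + l := ⟨m - i, by omega⟩
    rw [Nat.add_sub_cancel_left]
    nlinarith
  have hpow : (r ^ 2) ^ (i * (m - i)) ≤ (r ^ m) ^ i := by
    rw [← pow_mul, ← pow_mul]
    exact pow_le_pow_of_le_one hr₀ hr₁ hexp
  calc ((m + 2).choose (i + 1) : ℝ) * (r ^ 2) ^ (i * (m - i))
      ≤ ((m : ℝ) + 2) ^ (i + 1) * (r ^ m) ^ i :=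
        mul_le_mul hchoose hpow (by positivity) (by positivity)
    _ = (m + 2) * ((m + 2) * r ^ m) ^ i := by rw [mul_pow, pow_succ]; ring

lemma choose_mul_pow_le (hr₀ : 0 ≤ r) (hr₁ : r ≤ 1) {m i : ℕ} (hi : i ≤ m) :
    ((m + 2).choose (i + 1) : ℝ) * (r ^ 2) ^ (i * (m - i)) ≤
      (m + 2) * (((m + 2) * r ^ m) ^ i + ((m + 2) * r ^ m) ^ (m - i)) := by
  have hy : 0 ≤ ((m : ℝ) + 2) * r ^ m := by positivity
  rcases le_total (2 * i) m with h | h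
  · calc _ ≤ _ := choose_mul_pow_le_of_two_mul_le hr₀ hr₁ h
      _ ≤ _ := by gcongr; exact le_add_of_nonneg_right (by positivity)
  · have hsymm : (m + 2).choose (i + 1) = (m + 2).choose (m - i + 1) := by
      rw [← Nat.choose_symm (by omega)]
      congr 1
      omega
    have hexp : i * (m - i) = (m - i) * (m - (m - i)) := by
      rw [Nat.sub_sub_self hi, mul_comm]
    rw [hsymm, hexp]
    calc _ ≤ _ := choose_mul_pow_le_of_two_mul_le hr₀ hr₁ (i := m - i) (by omega)
      _ ≤ _ := by gcongr; exact le_add_of_nonneg_left (by positivity)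

lemma sum_choose_mul_pow_le (hr₀ : 0 ≤ r) (hr₁ : r ≤ 1) {m : ℕ}
    (hy : ((m : ℝ) + 2) * r ^ m ≤ 1 / 2) :
    ∑ i ∈ range (m + 1), ((m + 2).choose (i + 1) : ℝ) * (r ^ 2) ^ (i * (m - i)) ≤
      4 * (m + 2) := by
  set y := ((m : ℝ) + 2) * r ^ m
  have hy₀ : 0 ≤ y := by positivity
  have hreflect : ∑ i ∈ range (m + 1), y ^ (m - i) = ∑ i ∈ range (m + 1), y ^ i := by
    simpa using sum_range_reflect (fun i => y ^ i) (m + 1)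
  calc ∑ i ∈ range (m + 1), ((m + 2).choose (i + 1) : ℝ) * (r ^ 2) ^ (i * (m - i))
      ≤ ∑ i ∈ range (m + 1), (m + 2) * (y ^ i + y ^ (m - i)) :=
        sum_le_sum fun i hi => choose_mul_pow_le hr₀ hr₁ (by simpa [Nat.lt_succ_iff] using hi)
    _ = (m + 2) * (2 * ∑ i ∈ range (m + 1), y ^ i) := by
        rw [← mul_sum, sum_add_distrib, hreflect, two_mul]
    _ ≤ (m + 2) * (2 * 2) := by gcongr; exact geom_sum_le_two hy₀ hy _
    _ = 4 * (m + 2) := by ring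

end Estimates

lemma sum_choose_smul_pow_eq (q : ℝ) (m : ℕ) :
    ∑ j ∈ range (m + 3), (m + 2).choose j • q ^ ((j + 1) * (m + 4 - (j + 1))) =
      2 * q ^ (m + 3) +
        q ^ (2 * (m + 2)) *
          ∑ i ∈ range (m + 1), ((m + 2).choose (i + 1) : ℝ) * q ^ (i * (m - i)) := by
  have hexp : ∀ i ∈ range (m + 1),
      (i + 1 + 1) * (m + 4 - (i + 1 + 1)) = 2 * (m + 2) + i * (m - i) := by
    intro i hi
    obtain ⟨l, rfl⟩ : ∃ l, m = i + l := ⟨m - i, by have := mem_range.1 hi; omega⟩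
    rw [show i + l + 4 - (i + 1 + 1) = l + 2 by omega, Nat.add_sub_cancel_left]
    ring
  have hmid : ∀ i ∈ range (m + 1),
      (m + 2).choose (i + 1) • q ^ ((i + 1 + 1) * (m + 4 - (i + 1 + 1))) =
        q ^ (2 * (m + 2)) * (((m + 2).choose (i + 1) : ℝ) * q ^ (i * (m - i))) := by
    intro i hi
    rw [hexp i hi, pow_add, nsmul_eq_mul]
    ring
  rw [sum_range_succ', sum_range_succ, mul_sum, sum_congr rfl hmid,
    show m + 4 - (0 + 1) = m + 3 by omega, show m + 4 - (m + 2 + 1) = 1 by omega]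
  simp only [nsmul_eq_mul, Nat.choose_self, Nat.choose_zero_right]
  ring

lemma abs_PrGnp_not_reaches_sub_le (hp : p ∈ Set.Ioc 0 1) {m : ℕ} {s a : Fin (m + 4)}
    (hsa : s ≠ a) (hy : ((m : ℝ) + 2) * √(1 - p / 2) ^ m ≤ 1 / 2) :
    |PrGnp (m + 4) p {f | ¬ Reaches f s a} - 2 * (1 - p / 2) ^ (m + 3)| ≤
      64 * ((m : ℝ) + 4) * (1 - p / 2) ^ (2 * (m + 4)) := by
  obtain ⟨hp₀, hp₁⟩ := hp
  set q := 1 - p / 2 with hq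
  have hq₀ : 1 / 2 ≤ q := by linarith
  have hq₁ : q ≤ 1 := by linarith
  have hlow := PrGnp_not_reaches_ge hp₀.le hp₁ hsa
  rw [← hq, show m + 4 - 1 = m + 3 from rfl, show 2 * (m + 4) - 3 = 2 * (m + 2) + 1 by omega]
    at hlow
  have hmiddle := sum_choose_mul_pow_le (Real.sqrt_nonneg q) (Real.sqrt_le_one.2 hq₁) hy
  rw [Real.sq_sqrt (by linarith)] at hmiddle
  have hupp : PrGnp (m + 4) p {f | ¬ Reaches f s a} ≤
      2 * q ^ (m + 3) + q ^ (2 * (m + 2)) * (4 * (m + 2)) :=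
    calc PrGnp (m + 4) p {f | ¬ Reaches f s a}
        ≤ ∑ S : Finset (Fin (m + 4)) with s ∈ S ∧ a ∉ S, q ^ (#S * (m + 4 - #S)) :=
          PrGnp_not_reaches_le hp₀.le hp₁ s a
      _ = 2 * q ^ (m + 3) + q ^ (2 * (m + 2)) *
            ∑ i ∈ range (m + 1), ((m + 2).choose (i + 1) : ℝ) * q ^ (i * (m - i)) := by
          rw [sum_separating_eq (n := m + 2) (Fintype.card_fin _) hsa
            fun k => q ^ (k * (m + 4 - k)), sum_choose_smul_pow_eq]
      _ ≤ 2 * q ^ (m + 3) + q ^ (2 * (m + 2)) * (4 * (m + 2)) := by gcongr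
  have hsmall : q ^ (2 * (m + 2) + 1) ≤ q ^ (2 * (m + 2)) :=
    pow_le_pow_of_le_one (by linarith) hq₁ (Nat.le_succ _)
  have hshift : q ^ (2 * (m + 2)) ≤ 16 * q ^ (2 * (m + 4)) := by
    have h4 : (1 / 2 : ℝ) ^ 4 ≤ q ^ 4 := pow_le_pow_left₀ (by norm_num) hq₀ 4
    rw [show 2 * (m + 4) = 2 * (m + 2) + 4 by ring, pow_add]
    nlinarith [pow_nonneg (show 0 ≤ q by linarith) (2 * (m + 2))]
  have hY : 0 ≤ q ^ (2 * (m + 4)) := pow_nonneg (by linarith) _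
  rw [abs_le]
  constructor <;> nlinarith

lemma tendsto_add_two_mul_pow_atTop_nhds_zero {r : ℝ} (hr₀ : 0 ≤ r) (hr₁ : r < 1) :
    Tendsto (fun n : ℕ => ((n : ℝ) + 2) * r ^ n) atTop (nhds 0) := by
  have := (tendsto_self_mul_const_pow_of_lt_one hr₀ hr₁).add
    ((tendsto_pow_atTop_nhds_zero_of_lt_one hr₀ hr₁).const_mul 2)
  simpa only [add_mul, mul_zero, add_zero] using this

lemma exists_pos_bound_of_isBigO {f g : ℕ → ℝ} (hg : ∀ n, 0 < g n) (h : f =O[atTop] g) :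
    ∃ C, 0 < C ∧ ∀ n, |f n| ≤ C * g n := by
  rw [← Nat.cofinite_eq_atTop, Asymptotics.isBigO_cofinite_iff fun n hn => absurd hn (hg n).ne']
    at h
  obtain ⟨C, hC⟩ := h
  refine ⟨max C 1, by positivity, fun n => ?_⟩
  have := hC n
  rw [Real.norm_eq_abs, Real.norm_of_nonneg (hg n).le] at this
  exact this.trans (mul_le_mul_of_nonneg_right (le_max_left C 1) (hg n).le)

lemma tendsto_div_pow_of_abs_sub_le {q C : ℝ} (hq₀ : 0 < q) (hq₁ : q < 1) {P : ℕ → ℝ}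
    (h : ∀ n, |P n - 2 * q ^ (n + 1)| ≤ C * ((n : ℝ) + 2) * q ^ (2 * (n + 2))) :
    Tendsto (fun n => P n / q ^ (n + 1)) atTop (nhds 2) := by
  have hlim := (tendsto_add_two_mul_pow_atTop_nhds_zero hq₀.le hq₁).const_mul (C * q ^ 3)
  rw [mul_zero] at hlim
  rw [tendsto_iff_norm_sub_tendsto_zero]
  refine squeeze_zero (fun n => norm_nonneg _) (fun n => ?_) hlim
  have hpos : 0 < q ^ (n + 1) := pow_pos hq₀ _
  rw [Real.norm_eq_abs, div_sub' hpos.ne', abs_div, abs_of_pos hpos, div_le_iff₀ hpos,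
    mul_comm (q ^ (n + 1)) 2]
  calc |P n - 2 * q ^ (n + 1)| ≤ C * ((n : ℝ) + 2) * q ^ (2 * (n + 2)) := h n
    _ = C * q ^ 3 * (((n : ℝ) + 2) * q ^ n) * q ^ (n + 1) := by ring

/-- Fix `p ∈ (0,1]` and distinct vertices `s, a` of `⃗G(n,p)` (graphs
on `n + 2 ≥ 2` vertices). Then `P(s ↛ a) = 2(1-p/2)^(n-1) + O(n (1-p/2)^(2n))`;
in particular `P(s ↛ a)/(1-p/2)^(n-1) → 2`. -/
theorem gnp_not_reach_asymp
    (p : ℝ) (hp : p ∈ Set.Ioc (0 : ℝ) 1)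
    (s a : (n : ℕ) → Fin (n + 2)) (hsa : ∀ n, s n ≠ a n) :
    (∃ C : ℝ, 0 < C ∧ ∀ n : ℕ,
        |PrGnp (n + 2) p {f | ¬ Reaches f (s n) (a n)} - 2 * (1 - p / 2) ^ (n + 1)| ≤
          C * ((n : ℝ) + 2) * (1 - p / 2) ^ (2 * (n + 2))) ∧
    Filter.Tendsto (fun n : ℕ =>
        PrGnp (n + 2) p {f | ¬ Reaches f (s n) (a n)} / (1 - p / 2) ^ (n + 1))
      Filter.atTop (nhds 2) := by
  have hq₀ : 0 < 1 - p / 2 := by linarith [hp.2]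
  have hq₁ : 1 - p / 2 < 1 := by linarith [hp.1]
  have hremainder : (fun n : ℕ => PrGnp (n + 2) p {f | ¬ Reaches f (s n) (a n)} -
      2 * (1 - p / 2) ^ (n + 1)) =O[atTop]
        fun n : ℕ => ((n : ℝ) + 2) * (1 - p / 2) ^ (2 * (n + 2)) := by
    have hsqrt : √(1 - p / 2) < 1 := (Real.sqrt_lt' one_pos).2 (by rwa [one_pow])
    obtain ⟨M, hM⟩ := eventually_atTop.1 <|
      (tendsto_add_two_mul_pow_atTop_nhds_zero (Real.sqrt_nonneg _) hsqrt).eventually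
        (eventually_le_nhds one_half_pos)
    refine Asymptotics.IsBigO.of_bound 64 (eventually_atTop.2 ⟨M + 2, fun n hn => ?_⟩)
    obtain ⟨m, rfl⟩ : ∃ m, n = m + 2 := ⟨n - 2, by omega⟩
    rw [Real.norm_eq_abs, Real.norm_of_nonneg (by positivity), ← mul_assoc]
    convert abs_PrGnp_not_reaches_sub_le hp (hsa (m + 2)) (hM m (by omega)) using 3
    push_cast
    ring
  obtain ⟨C, hC, hbound⟩ := exists_pos_bound_of_isBigO (fun n => by positivity) hremainder
  simp only [← mul_assoc] at hbound
  exact ⟨⟨C, hC, hbound⟩, tendsto_div_pow_of_abs_sub_le hq₀ hq₁ hbound⟩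
end

section
/- Let 0 ≤ p ≤ 1, y := 1 − p/2, and let s, b be two fixed distinct vertices of ⃗G(n,p) with n ≥ 2. Then f_n(p) := P_{⃗G(n,p)}(s↛b) satisfies f_n(p) = Σ_{k=1}^{n−1} C(n−2, k−1)·d_p(k,k)·y^{k(n−k)}. -/
/-!
The event `s ↛ b` splits according to the out-cluster `X` of `s`, which ranges over the sets
with `s ∈ X` and `b ∉ X`. The cluster of `s` is `X` exactly when no edge leaves `X` and `s`
reaches all of `X` through edges inside `X`. The first condition only concerns the
`|X| (n - |X|)` edges between `X` and its complement, each of which independently fails to point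
out of `X` with probability `1 - p/2`; the second only concerns the edges inside `X`, and
relabelling `X` as `Fin |X|` (with `s` sent to any prescribed vertex) turns it into the event
whose probability is `d_p(|X|, |X|)`. There are `C(n-2, k-1)` such sets of size `k`.
-/

open Filter Real

open Finset

lemma Finset.sum_filter_mem_notMem_eq_sum_powerset {α M : Type*} [Fintype α] [DecidableEq α]
    [AddCommMonoid M] {s b : α} (hsb : s ≠ b) (g : Finset α → M) :
    ∑ X ∈ univ.filter (fun X : Finset α => s ∈ X ∧ b ∉ X), g X =
      ∑ Y ∈ (univ \ {s, b}).powerset, g (insert s Y) := by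
  refine sum_nbij' (fun X => X.erase s) (insert s) ?_ ?_ ?_ ?_ ?_
  · intro X hX
    simp only [mem_filter, mem_univ, true_and] at hX
    rw [mem_powerset]
    intro u hu
    simp only [mem_erase] at hu
    simp only [mem_sdiff, mem_univ, mem_insert, mem_singleton, true_and]
    rintro (rfl | rfl)
    exacts [hu.1 rfl, hX.2 hu.2]
  · intro Y hY
    simp only [mem_filter, mem_univ, true_and, mem_insert_self, mem_insert]
    rw [mem_powerset] at hY
    exact fun h => h.elim hsb.symm fun hb => by simpa using hY hb
  · intro X hX
    simp only [mem_filter, mem_univ, true_and] at hX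
    exact insert_erase hX.1
  · intro Y hY
    rw [mem_powerset] at hY
    exact erase_insert fun hs => by simpa using hY hs
  · intro X hX
    simp only [mem_filter, mem_univ, true_and] at hX
    rw [insert_erase hX.1]

lemma Finset.exists_embedding_map_univ_eq {α : Type*} (X : Finset α) {m : ℕ} (hX : #X = m)
    {s : α} (hs : s ∈ X) (t : Fin m) : ∃ j : Fin m ↪ α, univ.map j = X ∧ j t = s := by
  let e : Fin m ≃ X := (X.equivFin.trans (finCongr hX)).symm
  let σ := Equiv.swap t (e.symm ⟨s, hs⟩)
  refine ⟨(σ.trans e).toEmbedding.trans (Function.Embedding.subtype _), ?_, ?_⟩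
  · ext u
    simp only [mem_map, mem_univ, true_and]
    refine ⟨?_, fun hu => ⟨(σ.trans e).symm ⟨u, hu⟩, by simp⟩⟩
    rintro ⟨a, rfl⟩
    exact (e (σ a)).2
  · simp [σ]

lemma Fintype.sum_prod_mul_prod_compl {ι α R : Type*} [Fintype ι] [DecidableEq ι] [Fintype α]
    [CommSemiring R] (P : ι → Prop) [DecidablePred P] (w : α → R)
    (F : ({i // P i} → α) → R) (g : ι → α → R) :
    ∑ f : ι → α, (∏ i, w (f i)) * (F (fun i => f i) * ∏ i : {i // ¬P i}, g i (f i)) =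
      (∑ h : {i // P i} → α, (∏ i, w (h i)) * F h) *
        ∏ i : {i // ¬P i}, ∑ a, w a * g i a := by
  rw [Fintype.prod_sum, sum_mul_sum,
    ← (Equiv.piEquivPiSubtypeProd P fun _ => α).symm.sum_comp, Fintype.sum_prod_type]
  refine Finset.sum_congr rfl fun h _ => Finset.sum_congr rfl fun k _ => ?_
  rw [← Fintype.prod_subtype_mul_prod_subtype P, prod_mul_distrib]
  have hP (i : {i // P i}) : P i := i.2
  have hnP (i : {i // ¬P i}) : ¬P i := i.2
  simp only [Equiv.piEquivPiSubtypeProd_symm_apply, hP, hnP, dite_true, dite_false]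
  ring

namespace Edge

variable {m n : ℕ}

def mk {u v : Fin n} (h : u ≠ v) : Edge n :=
  if h' : u < v then ⟨(u, v), h'⟩ else ⟨(v, u), h.symm.lt_of_le (not_lt.1 h')⟩

lemma mk_of_lt {u v : Fin n} (h : u < v) : mk h.ne = ⟨(u, v), h⟩ := dif_pos h

lemma mk_of_gt {u v : Fin n} (h : v < u) : mk h.ne' = ⟨(v, u), h⟩ := dif_neg h.not_gt

def toSym2 (e : Edge n) : Sym2 (Fin n) := s(e.1.1, e.1.2)

lemma toSym2_injective : Function.Injective (toSym2 (n := n)) := by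
  rintro ⟨⟨a, b⟩, hab⟩ ⟨⟨c, d⟩, hcd⟩ h
  rcases Sym2.eq_iff.1 h with ⟨rfl, rfl⟩ | ⟨rfl, rfl⟩
  · rfl
  · exact absurd (hab.trans hcd) (lt_irrefl _)

lemma toSym2_mk {u v : Fin n} (h : u ≠ v) : (mk h).toSym2 = s(u, v) := by
  unfold mk; split_ifs
  · rfl
  · exact Sym2.eq_swap

def map (j : Fin m ↪ Fin n) (e : Edge m) : Edge n := mk (j.injective.ne e.2.ne)

lemma toSym2_map (j : Fin m ↪ Fin n) (e : Edge m) : (map j e).toSym2 = Sym2.map j e.toSym2 :=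
  toSym2_mk _

lemma map_injective (j : Fin m ↪ Fin n) : Function.Injective (map j) := fun e e' h =>
  toSym2_injective <| Sym2.map.injective j.injective <| by rw [← toSym2_map, ← toSym2_map, h]

lemma mem_map_of_mem_toSym2 (j : Fin m ↪ Fin n) (e : Edge m) {u : Fin n}
    (hu : u ∈ (map j e).toSym2) : u ∈ univ.map j := by
  rw [toSym2_map, Sym2.mem_map] at hu
  obtain ⟨a, -, rfl⟩ := hu
  exact mem_map_of_mem j (mem_univ a)

def Crosses (X : Finset (Fin n)) (e : Edge n) : Prop :=
  e.1.1 ∈ X ∧ e.1.2 ∉ X ∨ e.1.2 ∈ X ∧ e.1.1 ∉ X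

instance (X : Finset (Fin n)) : DecidablePred (Crosses X) := fun _ => by
  unfold Crosses; infer_instance

def Leaves (X : Finset (Fin n)) (e : Edge n) (o : Option Bool) : Prop :=
  e.1.1 ∈ X ∧ e.1.2 ∉ X ∧ o = some true ∨ e.1.2 ∈ X ∧ e.1.1 ∉ X ∧ o = some false

instance (X : Finset (Fin n)) (e : Edge n) : DecidablePred (Leaves X e) := fun _ => by
  unfold Leaves; infer_instance

lemma Leaves.crosses {X : Finset (Fin n)} {e : Edge n} {o : Option Bool} (h : e.Leaves X o) :
    e.Crosses X := by
  unfold Leaves at h; unfold Crosses; tauto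

lemma not_crosses_map (j : Fin m ↪ Fin n) (e : Edge m) : ¬ (map j e).Crosses (univ.map j) := by
  have h₁ := mem_map_of_mem_toSym2 j e (Sym2.mem_mk_left _ _)
  have h₂ := mem_map_of_mem_toSym2 j e (Sym2.mem_mk_right _ _)
  unfold Crosses; tauto

lemma card_filter_crosses (X : Finset (Fin n)) :
    #(univ.filter (Crosses X)) = #X * (n - #X) := by
  classical
  have hcompl : #Xᶜ = n - #X := by rw [card_compl, Fintype.card_fin]
  rw [← hcompl, ← card_product]
  have hsym (e : Edge n) :
      s((if e.1.1 ∈ X then (e.1.1, e.1.2) else (e.1.2, e.1.1)).1,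
        (if e.1.1 ∈ X then (e.1.1, e.1.2) else (e.1.2, e.1.1)).2) = e.toSym2 := by
    split_ifs
    · rfl
    · exact Sym2.eq_swap
  refine card_bij (fun e _ => if e.1.1 ∈ X then (e.1.1, e.1.2) else (e.1.2, e.1.1)) ?_ ?_ ?_
  · intro e he
    simp only [mem_filter, mem_univ, true_and, Crosses] at he
    split_ifs <;> simp_all
  · intro e _ e' _ h
    exact toSym2_injective (by rw [← hsym e, ← hsym e', h])
  · rintro ⟨u, v⟩ huv
    simp only [mem_product, mem_compl] at huv
    obtain ⟨hu, hv⟩ := huv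
    rcases lt_or_gt_of_ne (show u ≠ v by rintro rfl; exact hv hu) with h | h
    · exact ⟨⟨(u, v), h⟩, by simp [Crosses, hu, hv], by simp [hu]⟩
    · exact ⟨⟨(v, u), h⟩, by simp [Crosses, hu, hv], by simp [hv]⟩

end Edge

lemma dirEdge_iff_of_lt {n : ℕ} (f : Config n) {u v : Fin n} (h : u < v) :
    DirEdge f u v ↔ f ⟨(u, v), h⟩ = some true := by
  simp [DirEdge, h, h.not_gt]

lemma dirEdge_iff_of_gt {n : ℕ} (f : Config n) {u v : Fin n} (h : v < u) :
    DirEdge f u v ↔ f ⟨(v, u), h⟩ = some false := by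
  simp [DirEdge, h, h.not_gt]

section Relabel

variable {m n : ℕ}

/-- Relabelling the endpoints of an edge keeps their order iff `c`; `orient c` converts the
edge state accordingly. -/
def orient (c : Prop) [Decidable c] : Option Bool ≃ Option Bool :=
  if c then Equiv.refl _ else Equiv.optionCongr Equiv.boolNot

lemma edgeWeight_orient (p : ℝ) (c : Prop) [Decidable c] (o : Option Bool) :
    edgeWeight p (orient c o) = edgeWeight p o := by
  unfold orient; split_ifs <;> cases o <;> rfl

noncomputable def comapEquiv (j : Fin m ↪ Fin n) :
    ({e : Edge n // e ∈ Set.range (Edge.map j)} → Option Bool) ≃ Config m :=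
  (Equiv.ofInjective _ (Edge.map_injective j)).symm.piCongr' fun e => orient (j e.1.1 < j e.1.2)

noncomputable def Config.comap (j : Fin m ↪ Fin n) (f : Config n) : Config m :=
  comapEquiv j fun e => f e

lemma Config.comap_apply (j : Fin m ↪ Fin n) (f : Config n) (e : Edge m) :
    f.comap j e = orient (j e.1.1 < j e.1.2) (f (Edge.map j e)) :=
  rfl

lemma dirEdge_comap (j : Fin m ↪ Fin n) (f : Config n) {a b : Fin m} :
    DirEdge (f.comap j) a b ↔ DirEdge f (j a) (j b) := by
  rcases lt_trichotomy a b with h | rfl | h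
  · rw [dirEdge_iff_of_lt _ h, Config.comap_apply]
    rcases lt_or_gt_of_ne (j.injective.ne h.ne) with h' | h'
    · simp [dirEdge_iff_of_lt f h', Edge.map, Edge.mk_of_lt h', orient, h']
    · simp [dirEdge_iff_of_gt f h', Edge.map, Edge.mk_of_gt h', orient, h'.not_gt]
  · simp [DirEdge]
  · rw [dirEdge_iff_of_gt _ h, Config.comap_apply]
    rcases lt_or_gt_of_ne (j.injective.ne h.ne) with h' | h'
    · simp [dirEdge_iff_of_gt f h', Edge.map, Edge.mk_of_lt h', orient, h']
    · simp [dirEdge_iff_of_lt f h', Edge.map, Edge.mk_of_gt h', orient, h'.not_gt]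

end Relabel

section Cluster

variable {m n : ℕ}

def OutClosed (f : Config n) (X : Finset (Fin n)) : Prop :=
  ∀ u ∈ X, ∀ v, DirEdge f u v → v ∈ X

lemma OutClosed.mem_of_reaches {f : Config n} {X : Finset (Fin n)} {s u : Fin n}
    (hX : OutClosed f X) (hs : s ∈ X) (h : Reaches f s u) : u ∈ X := by
  induction h with
  | refl => exact hs
  | tail _ hvw ih => exact hX _ ih _ hvw

lemma outClosed_iff_forall_not_leaves (f : Config n) (X : Finset (Fin n)) :
    OutClosed f X ↔ ∀ e : Edge n, ¬ e.Leaves X (f e) := by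
  constructor
  · rintro hX e (⟨h₁, h₂, he⟩ | ⟨h₂, h₁, he⟩)
    · exact h₂ (hX _ h₁ _ ((dirEdge_iff_of_lt f e.2).2 he))
    · exact h₁ (hX _ h₂ _ ((dirEdge_iff_of_gt f e.2).2 he))
  · rintro h u hu v (⟨huv, he⟩ | ⟨hvu, he⟩) <;> by_contra hv
    · exact h _ (Or.inl ⟨hu, hv, he⟩)
    · exact h _ (Or.inr ⟨hu, hv, he⟩)

lemma Reaches.of_comap {j : Fin m ↪ Fin n} {f : Config n} {a b : Fin m}
    (h : Reaches (f.comap j) a b) : Reaches f (j a) (j b) :=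
  h.lift j fun _ _ => (dirEdge_comap j f).1

lemma Reaches.exists_comap {j : Fin m ↪ Fin n} {f : Config n} {a : Fin m} {v : Fin n}
    (hX : ∀ w, Reaches f (j a) w → w ∈ Set.range j) (h : Reaches f (j a) v) :
    ∃ b, j b = v ∧ Reaches (f.comap j) a b := by
  induction h with
  | refl => exact ⟨a, rfl, .refl⟩
  | @tail w v hw hwv ih =>
    obtain ⟨b, rfl, hb⟩ := ih
    obtain ⟨c, rfl⟩ := hX v (hw.tail hwv)
    exact ⟨c, rfl, hb.tail ((dirEdge_comap j f).2 hwv)⟩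

lemma cluster_eq_map_iff (j : Fin m ↪ Fin n) (f : Config n) (t : Fin m) :
    {u | Reaches f (j t) u} = ↑(univ.map j) ↔
      OutClosed f (univ.map j) ∧ {a | Reaches (f.comap j) t a} = Set.univ := by
  have hX : (↑(univ.map j) : Set (Fin n)) = Set.range j := by simp
  rw [hX, Set.eq_univ_iff_forall]
  constructor
  · intro h
    have hreach : ∀ w, Reaches f (j t) w ↔ w ∈ Set.range j := fun w => by rw [← h]; rfl
    refine ⟨fun u hu v huv => ?_, fun a => ?_⟩
    · rw [← mem_coe, hX, ← hreach]
      exact ((hreach u).2 (by simpa using hu)).tail huv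
    · obtain ⟨b, hb, htb⟩ :=
        Reaches.exists_comap (fun w => (hreach w).1) ((hreach (j a)).2 ⟨a, rfl⟩)
      rwa [j.injective hb] at htb
  · rintro ⟨hclosed, hreach⟩
    ext u
    refine ⟨fun hu => ?_, ?_⟩
    · simpa using hclosed.mem_of_reaches (by simp) hu
    · rintro ⟨a, rfl⟩
      exact (hreach a).of_comap

end Cluster

section Probability

variable {m n : ℕ} (p : ℝ)

lemma prGnp_eq_sum (E : Set (Config n)) [DecidablePred (· ∈ E)] :
    PrGnp n p E = ∑ f, (∏ e, edgeWeight p (f e)) * if f ∈ E then 1 else 0 := by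
  simp [PrGnp, prWeight, Set.indicator_apply]

lemma sum_edgeWeight_not_leaves (X : Finset (Fin n)) (e : Edge n) :
    ∑ o, edgeWeight p o * (if ¬ e.Leaves X o then 1 else 0) =
      if e.Crosses X then 1 - p / 2 else 1 := by
  by_cases h₁ : e.1.1 ∈ X <;> by_cases h₂ : e.1.2 ∈ X <;>
    simp [Edge.Leaves, Edge.Crosses, edgeWeight, h₁, h₂] <;> ring

lemma prod_edgeWeight_comapEquiv (j : Fin m ↪ Fin n)
    (h : {e : Edge n // e ∈ Set.range (Edge.map j)} → Option Bool) :
    ∏ e, edgeWeight p (comapEquiv j h e) = ∏ e, edgeWeight p (h e) := by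
  simp only [comapEquiv, Equiv.piCongr'_apply, edgeWeight_orient, Equiv.symm_symm]
  exact Equiv.prod_comp (Equiv.ofInjective _ (Edge.map_injective j)) fun e => edgeWeight p (h e)

lemma prod_sum_edgeWeight_not_leaves (X : Finset (Fin n)) (R : Edge n → Prop) [DecidablePred R]
    (hR : ∀ e, e.Crosses X → ¬ R e) :
    ∏ e : {e // ¬ R e}, ∑ o, edgeWeight p o * (if ¬ e.1.Leaves X o then 1 else 0) =
      (1 - p / 2) ^ (#X * (n - #X)) := by
  simp_rw [sum_edgeWeight_not_leaves]
  rw [← prod_subtype (univ.filter (¬ R ·)) (by simp) fun e => if e.Crosses X then _ else _,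
    prod_filter_of_ne fun e _ he => hR e (by by_contra h; simp [h] at he),
    ← prod_filter, prod_const, Edge.card_filter_crosses]

lemma outClosed_map_iff (j : Fin m ↪ Fin n) (f : Config n) :
    OutClosed f (univ.map j) ↔
      ∀ e : {e // e ∉ Set.range (Edge.map j)}, ¬ e.1.Leaves (univ.map j) (f e) := by
  rw [outClosed_iff_forall_not_leaves]
  refine ⟨fun h e => h e, fun h e => ?_⟩
  by_cases he : e ∈ Set.range (Edge.map j)
  · obtain ⟨e, rfl⟩ := he
    exact fun hl => Edge.not_crosses_map j e hl.crosses
  · exact h ⟨e, he⟩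

lemma prGnp_outClosed_comap (j : Fin m ↪ Fin n) (B : Set (Config m)) :
    PrGnp n p {f | OutClosed f (univ.map j) ∧ f.comap j ∈ B} =
      PrGnp m p B * (1 - p / 2) ^ (m * (n - m)) := by
  classical
  have hind (f : Config n) :
      (if f ∈ {f | OutClosed f (univ.map j) ∧ f.comap j ∈ B} then 1 else 0) =
        (if comapEquiv j (fun e => f e) ∈ B then (1 : ℝ) else 0) *
          ∏ e : {e // e ∉ Set.range (Edge.map j)},
            if ¬ e.1.Leaves (univ.map j) (f e) then 1 else 0 := by
    rw [prod_boole, ite_zero_mul_ite_zero, mul_one]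
    simp only [Set.mem_ofPred_eq, outClosed_map_iff, mem_univ, true_imp_iff]
    congr 1
    exact propext and_comm
  simp_rw [prGnp_eq_sum, hind]
  rw [Fintype.sum_prod_mul_prod_compl (· ∈ Set.range (Edge.map j)) (edgeWeight p)
      (fun h => if comapEquiv j h ∈ B then 1 else 0)
      (fun e o => if ¬ e.Leaves (univ.map j) o then 1 else 0),
    prod_sum_edgeWeight_not_leaves p _ _ ?_]
  · rw [← (comapEquiv j).sum_comp, card_map, card_univ, Fintype.card_fin]
    simp_rw [prod_edgeWeight_comapEquiv]
    -- the two sides differ only in the `Fintype` instance on the edges inside the image of `j`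
    congr!
  · rintro _ hcross ⟨e, rfl⟩
    exact Edge.not_crosses_map j e hcross

end Probability

theorem prGnp_cluster_eq (p : ℝ) {m n : ℕ} {s : Fin n} (X : Finset (Fin n)) (hs : s ∈ X)
    (hX : #X = m) (t : Fin m) :
    PrGnp n p {f | {u | Reaches f s u} = ↑X} =
      PrGnp m p {g | {u | Reaches g t u} = Set.univ} * (1 - p / 2) ^ (m * (n - m)) := by
  obtain ⟨j, rfl, rfl⟩ := X.exists_embedding_map_univ_eq hX hs t
  rw [← prGnp_outClosed_comap]
  exact congrArg _ (Set.ext fun f => cluster_eq_map_iff j f t)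

theorem prGnp_not_reaches (p : ℝ) {n : ℕ} (s b : Fin n) :
    PrGnp n p {f | ¬ Reaches f s b} =
      ∑ X ∈ univ.filter (fun X : Finset (Fin n) => s ∈ X ∧ b ∉ X),
        PrGnp n p {f | {u | Reaches f s u} = ↑X} := by
  classical
  simp_rw [prGnp_eq_sum]
  rw [sum_comm]
  simp_rw [← mul_sum]
  refine Finset.sum_congr rfl fun f _ => congrArg _ ?_
  have hcluster (X : Finset (Fin n)) :
      {u | Reaches f s u} = ↑X ↔ univ.filter (Reaches f s ·) = X := by
    rw [← coe_inj, coe_filter]; simp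
  have hs : Reaches f s s := .refl
  simp only [Set.mem_ofPred_eq, hcluster, sum_ite_eq, mem_filter, mem_univ, true_and, hs]

/-- The paper's summation index is `k + 1` here. -/
theorem gnp_not_reach_formula_general
    (p : ℝ)
    (n : ℕ) (hn : 2 ≤ n) (s b : Fin n) (hsb : s ≠ b)
    (s' : (i : ℕ) → Fin (i + 1)) :
    PrGnp n p {f | ¬ Reaches f s b} =
      ∑ k ∈ Finset.range (n - 1), (Nat.choose (n - 2) k : ℝ) *
          PrGnp (k + 1) p {f | {u | Reaches f (s' k) u} = Set.univ} *
          (1 - p / 2) ^ ((k + 1) * (n - (k + 1))) := by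
  have hcard : #(univ \ {s, b}) = n - 2 := by
    rw [card_sdiff_of_subset (subset_univ _), card_univ, Fintype.card_fin, card_pair hsb]
  have hcluster (Y : Finset (Fin n)) (hY : Y ∈ (univ \ {s, b}).powerset) :
      PrGnp n p {f | {u | Reaches f s u} = ↑(insert s Y)} =
        PrGnp (#Y + 1) p {g | {u | Reaches g (s' #Y) u} = Set.univ} *
          (1 - p / 2) ^ ((#Y + 1) * (n - (#Y + 1))) :=
    prGnp_cluster_eq p _ (mem_insert_self s Y)
      (card_insert_of_notMem fun hs => by simpa using mem_powerset.1 hY hs) _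
  rw [prGnp_not_reaches, sum_filter_mem_notMem_eq_sum_powerset hsb, sum_congr rfl hcluster,
    sum_powerset_apply_card (fun k => PrGnp (k + 1) p {g | {u | Reaches g (s' k) u} = Set.univ} *
      (1 - p / 2) ^ ((k + 1) * (n - (k + 1)))), hcard, show n - 2 + 1 = n - 1 by omega]
  simp only [nsmul_eq_mul, mul_assoc]

/-- Let `0 ≤ p ≤ 1`, `y := 1 - p/2`, and let `s, b` be distinct
vertices of `⃗G(n,p)` with `n ≥ 2`. Then
`P(s ↛ b) = ∑_{k=1}^{n-1} C(n-2,k-1) d_p(k,k) y^(k(n-k))`, where `d_p(k,k)` is the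
probability in `⃗G(k,p)` that the out-cluster of a vertex is everything.
(The summation index `k` of the paper is `k + 1` below.) -/
theorem gnp_not_reach_formula
    (p : ℝ) (hp : p ∈ Set.Icc (0 : ℝ) 1)
    (n : ℕ) (hn : 2 ≤ n) (s b : Fin n) (hsb : s ≠ b)
    (s' : (i : ℕ) → Fin (i + 1)) :
    PrGnp n p {f | ¬ Reaches f s b} =
      ∑ k ∈ Finset.range (n - 1), (Nat.choose (n - 2) k : ℝ) *
          PrGnp (k + 1) p {f | {u | Reaches f (s' k) u} = Set.univ} *
          (1 - p / 2) ^ ((k + 1) * (n - (k + 1))) :=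
  gnp_not_reach_formula_general p n hn s b hsb s'
end
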